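/- Let Ψ be a root datum with a finite group Γ of automorphisms stabilizing a base Δ. Let i* : X* → X̄* be the projection to coinvariants modulo torsion, and let Φ̄ = i*(Φ). Then for every α ∈ Φ̄, the preimage (i*)^{-1}(α) ∩ Φ is a single Γ-orbit of roots in Φ. -/

import Mathlib

open scoped BigOperators Classical

/-- The multiplicative group structure on `AddAut A` (composition, `e₁ * e₂ = e₂.trans e₁`),
which Mathlib used to provide and now replaces by an additive one. -/
instance AddAut.group (A : Type*) [Add A] : Group (AddAut A) :=
  inferInstanceAs (Group (Multiplicative (AddAut A)))

/-- A (not necessarily reduced) root datum `Ψ = (X*, Φ, X_*, Φ^∨)`: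
dual lattices `X`, `Y` in perfect duality, a finite set of roots, and a
coroot map satisfying the usual axioms. -/
structure ZRootDatum (X Y : Type) [AddCommGroup X] [AddCommGroup Y] : Type where
  pair : X →+ Y →+ ℤ
  perfect : Function.Bijective fun x : X => pair x
  perfect' : Function.Bijective fun y : Y => pair.flip y
  roots : Finset X
  coroot : X → Y
  pair_self : ∀ β ∈ roots, pair β (coroot β) = 2
  reflect_mem : ∀ β ∈ roots, ∀ x ∈ roots, x - pair x (coroot β) • β ∈ roots
  coreflect_mem : ∀ β ∈ roots, ∀ β' ∈ roots,
    ∃ β'' ∈ roots, coroot β' - pair β (coroot β') • coroot β = coroot β''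

variable {X Y Γ : Type} [AddCommGroup X] [AddCommGroup Y] [Group Γ]

/-- The Weyl group of a root datum: the subgroup of `Aut(X)` generated by the
reflections `w_β : x ↦ x - ⟨x, β^∨⟩β` through the roots. -/
def ZRootDatum.weylGroup (Ψ : ZRootDatum X Y) : Subgroup (AddAut X) :=
  Subgroup.closure {w : AddAut X | ∃ β ∈ Ψ.roots, ∀ x, w x = x - Ψ.pair x (Ψ.coroot β) • β}

/-- `Δ` is a base (system of simple roots) of the root datum. -/
def ZRootDatum.IsBase (Ψ : ZRootDatum X Y) (Δ : Finset X) : Prop :=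
  (↑Δ : Set X) ⊆ ↑Ψ.roots ∧
  LinearIndependent ℤ (fun a : ↥(↑Δ : Set X) => (a : X)) ∧
  ∀ β ∈ Ψ.roots, ∃ c : X → ℤ,
    β = ∑ a ∈ Δ, c a • a ∧ ((∀ a ∈ Δ, 0 ≤ c a) ∨ (∀ a ∈ Δ, c a ≤ 0))

/-- A group `Γ` acting (via `ρ` on `X*` and `ρ'` on `X_*`) by automorphisms of
the root datum `Ψ`. -/
structure RDAction (Ψ : ZRootDatum X Y) (ρ : Γ →* AddAut X) (ρ' : Γ →* AddAut Y) : Prop where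
  pair_eq : ∀ γ x y, Ψ.pair (ρ γ x) (ρ' γ y) = Ψ.pair x y
  root_mem : ∀ γ, ∀ β ∈ Ψ.roots, ρ γ β ∈ Ψ.roots
  coroot_eq : ∀ γ, ∀ β ∈ Ψ.roots, Ψ.coroot (ρ γ β) = ρ' γ (Ψ.coroot β)

/-- The norm map `N : x ↦ ∑_{γ ∈ Γ} γ·x`.  For a free lattice `X`, its kernel
is exactly the kernel of the projection of `X` onto the coinvariants `X_Γ`
modulo torsion. -/
noncomputable def normMap [Fintype Γ] (ρ : Γ →* AddAut X) : X →+ X :=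
  ∑ γ : Γ, ((ρ γ : X ≃+ X) : X →+ X)

/-- The projection `i* : X* → X̄*` onto the coinvariant lattice modulo torsion. -/
noncomputable def istar [Fintype Γ] (ρ : Γ →* AddAut X) : X →+ X ⧸ (normMap ρ).ker :=
  QuotientAddGroup.mk' (normMap ρ).ker

/-!
Since `i*` and the norm map `N = ∑_γ γ` have the same kernel, the fibre condition reads
`N β' = N β`. As `Γ` permutes the base, `N` kills no root. The canonical form
`B = ∑_α ⟨·, α^∨⟩ ⟨·, α^∨⟩` is `Γ`-invariant and positive definite on the span of the roots, so
`0 < B (N β) (N β) = B (N β) (N β') = |Γ| ∑_γ B (γ β) β'` and some `B (γ β) β'` is positive.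
For roots this forces `γ β = β'` or `γ β - β'` to be a root, and the latter is impossible
because `N (γ β - β') = 0`.
-/

namespace ZRootDatum

noncomputable def pairL (Ψ : ZRootDatum X Y) : X →ₗ[ℤ] Y →ₗ[ℤ] ℤ where
  toFun x := (Ψ.pair x).toIntLinearMap
  map_add' x z := by ext y; simp
  map_smul' n x := by ext y; simp

@[simp] lemma pairL_apply (Ψ : ZRootDatum X Y) (x : X) (y : Y) : Ψ.pairL x y = Ψ.pair x y := rfl

instance (Ψ : ZRootDatum X Y) : Ψ.pairL.IsPerfPair where
  bijective_left := (addMonoidHomLequivInt ℤ).bijective.comp Ψ.perfect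
  bijective_right := (addMonoidHomLequivInt ℤ).bijective.comp Ψ.perfect'

lemma isTorsionFree (Ψ : ZRootDatum X Y) : Module.IsTorsionFree ℤ X :=
  Function.Injective.moduleIsTorsionFree Ψ.pairL Ψ.pairL.toPerfPair.injective (map_smul Ψ.pairL)

variable (Ψ : ZRootDatum X Y)

lemma root_ne_zero {β : X} (hβ : β ∈ Ψ.roots) : β ≠ 0 := by
  rintro rfl
  simpa using Ψ.pair_self 0 hβ

/-- The map `x ↦ x + ⟨x, v^∨⟩ (u - v)` sends `v + 2n (u - v)` to `v + 2(n + 1) (u - v)`, so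
if it preserved the finite set of roots these would be infinitely many roots unless `u = v`. -/
lemma eq_of_mapsTo_transvection {u v : X} (hv : v ∈ Ψ.roots)
    (hu : Ψ.pair u (Ψ.coroot v) = 2)
    (hmaps : ∀ x ∈ Ψ.roots, x + Ψ.pair x (Ψ.coroot v) • (u - v) ∈ Ψ.roots) :
    u = v := by
  have := Ψ.isTorsionFree
  have hd : Ψ.pair (u - v) (Ψ.coroot v) = 0 := by simp [hu, Ψ.pair_self v hv]
  have hmem : ∀ n : ℕ, v + (2 * n : ℤ) • (u - v) ∈ Ψ.roots := by
    intro n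
    induction n with
    | zero => simpa using hv
    | succ n ih =>
      convert hmaps _ ih using 1
      simp only [map_add, map_zsmul, AddMonoidHom.add_apply, AddMonoidHom.smul_apply, hd,
        smul_zero, add_zero, Ψ.pair_self v hv]
      push_cast
      module
  by_contra hne
  have hinj : Function.Injective fun n : ℕ => v + (2 * n : ℤ) • (u - v) := by
    intro m n hmn
    have := smul_left_injective ℤ (sub_ne_zero.mpr hne) (add_left_cancel hmn)
    simpa using this
  exact (Set.infinite_of_injective_forall_mem hinj hmem) Ψ.roots.finite_toSet

lemma coroot_injOn : Set.InjOn Ψ.coroot Ψ.roots := by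
  intro β hβ β' hβ' h
  refine Ψ.eq_of_mapsTo_transvection hβ' (h ▸ Ψ.pair_self β hβ) fun x hx => ?_
  convert Ψ.reflect_mem β hβ _ (Ψ.reflect_mem β' hβ' x hx) using 1
  simp only [h, map_sub, map_zsmul, AddMonoidHom.sub_apply, AddMonoidHom.smul_apply,
    Ψ.pair_self β' hβ', smul_eq_mul]
  module

def corootEmbedding : Ψ.roots ↪ Y :=
  ⟨fun β => Ψ.coroot β, fun β β' h => Subtype.ext (Ψ.coroot_injOn β.2 β'.2 h)⟩

@[simp] lemma corootEmbedding_apply (β : Ψ.roots) : Ψ.corootEmbedding β = Ψ.coroot β := rfl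

noncomputable def toRootPairing : RootPairing Ψ.roots ℤ X Y :=
  have := Ψ.isTorsionFree
  RootPairing.mk' Ψ.pairL (Function.Embedding.subtype _) Ψ.corootEmbedding
    (fun β => Ψ.pair_self β β.2)
    (by
      rintro β _ ⟨β', rfl⟩
      exact ⟨⟨_, Ψ.reflect_mem β β.2 β' β'.2⟩, by simp [Module.preReflection_apply]⟩)
    (by
      rintro β _ ⟨β', rfl⟩
      obtain ⟨β'', hβ'', h⟩ := Ψ.coreflect_mem β β.2 β' β'.2
      exact ⟨⟨β'', hβ''⟩, by simp [Module.preReflection_apply, h]⟩)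

@[simp] lemma toRootPairing_root (β : Ψ.roots) : Ψ.toRootPairing.root β = β := rfl

lemma rootForm_apply (x y : X) :
    Ψ.toRootPairing.RootForm x y = ∑ β : Ψ.roots, Ψ.pair x (Ψ.coroot β) * Ψ.pair y (Ψ.coroot β) :=
  Ψ.toRootPairing.rootForm_apply_apply x y

lemma mem_rootSpan {β : X} (hβ : β ∈ Ψ.roots) : β ∈ Ψ.toRootPairing.rootSpan ℤ :=
  Submodule.subset_span ⟨⟨β, hβ⟩, rfl⟩

lemma sub_mem_roots_of_rootForm_pos {β β' : X} (hβ : β ∈ Ψ.roots) (hβ' : β' ∈ Ψ.roots)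
    (hne : β ≠ β') (hpos : 0 < Ψ.toRootPairing.RootForm β β') : β - β' ∈ Ψ.roots := by
  have := Ψ.isTorsionFree
  have hpair : 0 < Ψ.toRootPairing.pairingIn ℤ ⟨β, hβ⟩ ⟨β', hβ'⟩ := by
    refine ((Ψ.toRootPairing.posRootForm ℤ).zero_lt_apply_root_root_iff _ _).mp ?_
    have h := Ψ.toRootPairing.algebraMap_rootFormIn ℤ ⟨β, Ψ.mem_rootSpan hβ⟩ ⟨β', Ψ.mem_rootSpan hβ'⟩
    rw [Algebra.algebraMap_self_apply] at h
    simpa [h] using hpos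
  obtain ⟨γ, hγ⟩ := Ψ.toRootPairing.root_sub_root_mem_of_pairingIn_pos hpair (by simpa using hne)
  exact hγ ▸ γ.2

end ZRootDatum

section NormMap

variable [Fintype Γ] (ρ : Γ →* AddAut X)

lemma normMap_apply (x : X) : normMap ρ x = ∑ γ : Γ, ρ γ x := by
  simp [normMap]

@[simp] lemma normMap_rho (γ : Γ) (x : X) : normMap ρ (ρ γ x) = normMap ρ x := by
  simp only [normMap_apply]
  exact Fintype.sum_equiv (Equiv.mulRight γ) _ _ fun σ => by rw [Equiv.coe_mulRight, map_mul]; rfl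

@[simp] lemma rho_normMap (γ : Γ) (x : X) : ρ γ (normMap ρ x) = normMap ρ x := by
  simp only [normMap_apply, map_sum]
  exact Fintype.sum_equiv (Equiv.mulLeft γ) _ _ fun σ => by rw [Equiv.coe_mulLeft, map_mul]; rfl

lemma istar_eq_istar_iff (x y : X) : istar ρ x = istar ρ y ↔ normMap ρ x = normMap ρ y := by
  simp [istar, QuotientAddGroup.eq, neg_add_eq_zero]

lemma apply_normMap_of_invariant (B : X →ₗ[ℤ] X →ₗ[ℤ] ℤ)
    (hB : ∀ γ x y, B (ρ γ x) (ρ γ y) = B x y) {z : X} (hz : ∀ γ, ρ γ z = z) (y : X) :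
    B z (normMap ρ y) = Fintype.card Γ * B z y := by
  calc B z (normMap ρ y) = ∑ γ : Γ, B (ρ γ z) (ρ γ y) := by simp [normMap_apply, hz]
    _ = Fintype.card Γ * B z y := by simp [hB]

end NormMap

section Base

variable {Δ : Finset X} {ρ : Γ →* AddAut X}

lemma rho_inv_apply_rho (γ : Γ) (x : X) : ρ γ⁻¹ (ρ γ x) = x := by
  rw [map_inv]
  exact (ρ γ).symm_apply_apply x

lemma sum_base_comp_rho (hstab : ∀ γ : Γ, ∀ a ∈ Δ, ρ γ a ∈ Δ) {M : Type*} [AddCommMonoid M] (γ : Γ) (f : X → M) :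
    ∑ a ∈ Δ, f (ρ γ a) = ∑ a ∈ Δ, f a :=
  Finset.sum_equiv (ρ γ).toEquiv
    (fun a => ⟨hstab γ a, fun h => rho_inv_apply_rho γ a ▸ hstab γ⁻¹ _ h⟩) fun _ _ => rfl

lemma rho_sum_base (hstab : ∀ γ : Γ, ∀ a ∈ Δ, ρ γ a ∈ Δ) (γ : Γ) (c : X → ℤ) :
    ρ γ (∑ a ∈ Δ, c a • a) = ∑ a ∈ Δ, c (ρ γ⁻¹ a) • a := by
  rw [map_sum, ← sum_base_comp_rho hstab γ fun a => c (ρ γ⁻¹ a) • a]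
  simp only [map_zsmul, rho_inv_apply_rho]

lemma normMap_sum_base [Fintype Γ] (hstab : ∀ γ : Γ, ∀ a ∈ Δ, ρ γ a ∈ Δ) (c : X → ℤ) :
    normMap ρ (∑ a ∈ Δ, c a • a) = ∑ a ∈ Δ, (∑ γ : Γ, c (ρ γ⁻¹ a)) • a := by
  simp only [normMap_apply, rho_sum_base hstab, Finset.sum_smul]
  exact Finset.sum_comm

/-- A root is a combination of simple roots with coefficients of constant sign; since `Γ`
permutes the simple roots, the coefficients of its norm have the same sign and sum to `|Γ|`
times the (nonzero) height of the root. -/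
lemma ZRootDatum.IsBase.normMap_root_ne_zero [Fintype Γ] {Ψ : ZRootDatum X Y}
    (hΔ : Ψ.IsBase Δ) (hstab : ∀ γ : Γ, ∀ a ∈ Δ, ρ γ a ∈ Δ) {δ : X} (hδ : δ ∈ Ψ.roots) :
    normMap ρ δ ≠ 0 := by
  obtain ⟨c, rfl, hsign⟩ := hΔ.2.2 δ hδ
  intro h0
  have hcoeff : ∀ a ∈ Δ, ∑ γ : Γ, c (ρ γ⁻¹ a) = 0 :=
    linearIndepOn_finset_iff.mp (show LinearIndepOn ℤ id (Δ : Set X) from hΔ.2.1) _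
      (by simpa [normMap_sum_base hstab] using h0)
  have hheight : Fintype.card Γ * ∑ a ∈ Δ, c a = 0 := by
    calc Fintype.card Γ * ∑ a ∈ Δ, c a = ∑ γ : Γ, ∑ a ∈ Δ, c a := by
          rw [Finset.sum_const, Finset.card_univ, nsmul_eq_mul]
      _ = ∑ γ : Γ, ∑ a ∈ Δ, c (ρ γ⁻¹ a) := by simp only [sum_base_comp_rho hstab]
      _ = 0 := by rw [Finset.sum_comm]; exact Finset.sum_eq_zero hcoeff
  have hc : ∀ a ∈ Δ, c a = 0 := by
    have hsum : ∑ a ∈ Δ, c a = 0 := by simpa [Fintype.card_ne_zero] using hheight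
    rcases hsign with hs | hs
    · exact (Finset.sum_eq_zero_iff_of_nonneg hs).mp hsum
    · exact (Finset.sum_eq_zero_iff_of_nonpos hs).mp hsum
  exact Ψ.root_ne_zero hδ (Finset.sum_eq_zero fun a ha => by rw [hc a ha, zero_smul])

end Base

lemma RDAction.rootForm_rho {Ψ : ZRootDatum X Y} {ρ : Γ →* AddAut X} {ρ' : Γ →* AddAut Y}
    (hact : RDAction Ψ ρ ρ') (γ : Γ) (x y : X) :
    Ψ.toRootPairing.RootForm (ρ γ x) (ρ γ y) = Ψ.toRootPairing.RootForm x y := by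
  let e : Ψ.roots → Ψ.roots := fun β => ⟨ρ γ β, hact.root_mem γ β β.2⟩
  have he : e.Bijective := Finite.injective_iff_bijective.mp fun β β' h =>
    Subtype.ext ((ρ γ).injective (congrArg Subtype.val h))
  rw [Ψ.rootForm_apply, Ψ.rootForm_apply]
  refine (Fintype.sum_equiv (Equiv.ofBijective e he) _ _ fun β => ?_).symm
  simp [e, hact.coroot_eq γ β β.2, hact.pair_eq]

lemma RDAction.exists_rootForm_pos [Fintype Γ] {Ψ : ZRootDatum X Y} {ρ : Γ →* AddAut X}
    {ρ' : Γ →* AddAut Y} (hact : RDAction Ψ ρ ρ') {β β' : X} (hβ : β ∈ Ψ.roots)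
    (hN : normMap ρ β' = normMap ρ β) (hN0 : normMap ρ β ≠ 0) :
    ∃ γ, 0 < Ψ.toRootPairing.RootForm (ρ γ β) β' := by
  have hspan : normMap ρ β ∈ Ψ.toRootPairing.rootSpan ℤ := by
    rw [normMap_apply]
    exact Submodule.sum_mem _ fun γ _ => Ψ.mem_rootSpan (hact.root_mem γ β hβ)
  have hpos := Ψ.toRootPairing.rootForm_pos_of_ne_zero hspan hN0
  nth_rw 2 [← hN] at hpos
  rw [apply_normMap_of_invariant ρ _ hact.rootForm_rho (rho_normMap ρ · β), normMap_apply,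
    map_sum, LinearMap.sum_apply] at hpos
  have hsum : ∑ _γ : Γ, (0 : ℤ) < ∑ γ : Γ, Ψ.toRootPairing.RootForm (ρ γ β) β' := by
    simpa using pos_of_mul_pos_right hpos (by positivity)
  obtain ⟨γ, -, hγ⟩ := Finset.exists_lt_of_sum_lt hsum
  exact ⟨γ, hγ⟩

theorem istar_fiber_is_orbit_general
    [Fintype Γ]
    (Ψ : ZRootDatum X Y) (ρ : Γ →* AddAut X) (ρ' : Γ →* AddAut Y)
    (hact : RDAction Ψ ρ ρ') (Δ : Finset X) (hΔ : Ψ.IsBase Δ)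
    (hstab : ∀ γ : Γ, ∀ a ∈ Δ, ρ γ a ∈ Δ)
    (β : X) (hβ : β ∈ Ψ.roots) (β' : X) :
    (β' ∈ Ψ.roots ∧ istar ρ β' = istar ρ β) ↔ ∃ γ : Γ, ρ γ β = β' := by
  rw [istar_eq_istar_iff]
  constructor
  · rintro ⟨hβ', hN⟩
    obtain ⟨γ, hγ⟩ := hact.exists_rootForm_pos hβ hN (hΔ.normMap_root_ne_zero hstab hβ)
    refine ⟨γ, by_contra fun hne => ?_⟩
    have hsub := Ψ.sub_mem_roots_of_rootForm_pos (hact.root_mem γ β hβ) hβ' hne hγ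
    exact hΔ.normMap_root_ne_zero hstab hsub (by simp [hN])
  · rintro ⟨γ, rfl⟩
    exact ⟨hact.root_mem γ β hβ, normMap_rho ρ γ β⟩

/-- Let `Ψ` be a root datum with a finite group `Γ` of
automorphisms stabilizing a base `Δ`, and `i*` the projection to coinvariants
modulo torsion.  Then for every `α ∈ Φ̄ = i*(Φ)`, the fiber `(i*)⁻¹(α) ∩ Φ` is a
single `Γ`-orbit of roots: for `β ∈ Φ` with `i*β = α`, a root `β'` satisfies
`i*β' = α` iff `β'` lies in the `Γ`-orbit of `β`. -/
theorem istar_fiber_is_orbit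
    [Fintype Γ] [Module.Free ℤ X] [Module.Finite ℤ X]
    (Ψ : ZRootDatum X Y) (ρ : Γ →* AddAut X) (ρ' : Γ →* AddAut Y)
    (hact : RDAction Ψ ρ ρ') (Δ : Finset X) (hΔ : Ψ.IsBase Δ)
    (hstab : ∀ γ : Γ, ∀ a ∈ Δ, ρ γ a ∈ Δ)
    (β : X) (hβ : β ∈ Ψ.roots) (β' : X) :
    (β' ∈ Ψ.roots ∧ istar ρ β' = istar ρ β) ↔ ∃ γ : Γ, ρ γ β = β' :=
  istar_fiber_is_orbit_general Ψ ρ ρ' hact Δ hΔ hstab β hβ β'
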